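/- Let Σ=(Γ=(V,E),σ) be a signed graph, X a finite nonempty set, and ι an involution of X with t = |{x ∈ X : ι(x) = x}| fixed points. Then the number P_Σ(X,ι) of proper (X,ι)-colorings of Σ is given by P_Σ(X,ι) = (−1)^{|V|−k(Σ)} · |X|^{k(Σ)} · T_Σ(1−|X|, 0, 1−t/|X|). -/

import Mathlib

attribute [local instance] Classical.propDecidable

noncomputable section SignedGraphs

/-- A signed graph: a multigraph with ordered pairs of endpoints (the order is
an artefact of the encoding) together with a sign `±1` on each edge. -/
structure SGraph (V : Type*) (E : Type*) where
  ends : E → V × V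
  sign : E → ℤˣ

namespace SGraph

variable {V E : Type*}

/-- Endpoint of `e` on side `b`; a loop has both endpoints equal, but its two
half-edges are distinguished by the side `b`. -/
def endpt (Γ : SGraph V E) (e : E) (b : Bool) : V :=
  cond b (Γ.ends e).1 (Γ.ends e).2

/-- `e` is a loop of the underlying graph. -/
def IsLoop (Γ : SGraph V E) (e : E) : Prop := (Γ.ends e).1 = (Γ.ends e).2

/-- Walks in a signed multigraph: a step traverses an edge `e` in direction `d`
(from the side-`d` endpoint to the other endpoint). -/
inductive Walk (Γ : SGraph V E) : V → V → Type _
  | nil (v : V) : Walk Γ v v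
  | cons (e : E) (d : Bool) {w : V} (p : Walk Γ (Γ.endpt e (!d)) w) : Walk Γ (Γ.endpt e d) w

namespace Walk

variable {Γ : SGraph V E}

/-- The list of vertices visited by a walk (including the final one). -/
def verts : ∀ {u v : V}, Γ.Walk u v → List V
  | _, _, .nil x => [x]
  | _, _, .cons e d p => Γ.endpt e d :: p.verts

/-- The list of edges traversed by a walk. -/
def edges : ∀ {u v : V}, Γ.Walk u v → List E
  | _, _, .nil _ => []
  | _, _, .cons e _ p => e :: p.edges

/-- The list of (edge, direction) steps of a walk. -/
def steps : ∀ {u v : V}, Γ.Walk u v → List (E × Bool)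
  | _, _, .nil _ => []
  | _, _, .cons e d p => (e, d) :: p.steps

/-- The sources of the steps of a walk, i.e. all visited vertices except the last. -/
def srcs {u v : V} (W : Γ.Walk u v) : List V := W.verts.dropLast

/-- The sign of a walk: the product of the signs of its edges. -/
def sgn : ∀ {u v : V}, Γ.Walk u v → ℤˣ
  | _, _, .nil _ => 1
  | _, _, .cons e _ p => Γ.sign e * p.sgn

/-- Concatenation of walks. -/
def append : ∀ {u v w : V}, Γ.Walk u v → Γ.Walk v w → Γ.Walk u w
  | _, _, _, .nil _, q => q
  | _, _, _, .cons e d p, q => .cons e d (p.append q)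

/-- The sum `Σᵢ f(eᵢ)` of the values of `f` on the edges of the walk,
with multiplicity. -/
def edgeSum {G : Type*} [AddCommGroup G] (f : E → G) {u v : V} (W : Γ.Walk u v) : G :=
  (W.edges.map f).sum

/-- The sum `Σᵢ ω(vᵢ,eᵢ)·(Π_{j<i} σ(eⱼ))·f(eᵢ)` along a walk, where `ω(vᵢ,eᵢ)`
is the value of `ω` on the half-edge by which the walk leaves `vᵢ`. -/
def tensionSum {G : Type*} [AddCommGroup G] (ω : E → Bool → ℤˣ) (f : E → G) :
    ∀ {u v : V}, Γ.Walk u v → G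
  | _, _, .nil _ => 0
  | _, _, .cons e d p => ((ω e d : ℤ) • f e) + ((Γ.sign e : ℤ) • tensionSum ω f p)

/-- `Q` is the reverse of the walk `P`. -/
def IsReverseOf {u v : V} (Q : Γ.Walk v u) (P : Γ.Walk u v) : Prop :=
  Q.steps = P.steps.reverse.map fun s => (s.1, !s.2)

end Walk

/-- A closed walk is a cycle if it is nontrivial, visits no vertex twice and
uses no edge twice. -/
def IsCycle (Γ : SGraph V E) {v : V} (W : Γ.Walk v v) : Prop :=
  W.edges ≠ [] ∧ W.srcs.Nodup ∧ W.edges.Nodup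

/-- A balanced (positive) cycle. -/
def IsBalancedCycle (Γ : SGraph V E) {v : V} (W : Γ.Walk v v) : Prop :=
  Γ.IsCycle W ∧ W.sgn = 1

/-- An unbalanced (negative) cycle. -/
def IsUnbalancedCycle (Γ : SGraph V E) {v : V} (W : Γ.Walk v v) : Prop :=
  Γ.IsCycle W ∧ W.sgn = -1

/-- A nontrivial walk that is a simple path (all visited vertices distinct). -/
def IsPathWalk (Γ : SGraph V E) {u v : V} (P : Γ.Walk u v) : Prop :=
  P.edges ≠ [] ∧ P.verts.Nodup

/-- A tight handcuff at `v`: two edge-disjoint unbalanced cycles sharing exactly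
the vertex `v`. -/
def IsTightHandcuff (Γ : SGraph V E) {v : V} (C₁ C₂ : Γ.Walk v v) : Prop :=
  Γ.IsUnbalancedCycle C₁ ∧ Γ.IsUnbalancedCycle C₂ ∧
    (∀ x ∈ C₁.srcs, x ∈ C₂.srcs → x = v) ∧ ∀ e ∈ C₁.edges, e ∉ C₂.edges

/-- A loose handcuff: two vertex-disjoint unbalanced cycles `C₁` (at `u`) and
`C₂` (at `w`) joined by a simple path `P` from `u` to `w` meeting the cycles
exactly in its endpoints. -/
def IsLooseHandcuff (Γ : SGraph V E) {u w : V} (C₁ : Γ.Walk u u) (P : Γ.Walk u w)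
    (C₂ : Γ.Walk w w) : Prop :=
  Γ.IsUnbalancedCycle C₁ ∧ Γ.IsUnbalancedCycle C₂ ∧ Γ.IsPathWalk P ∧
    (∀ x ∈ C₁.srcs, x ∉ C₂.srcs) ∧
    (∀ x ∈ P.verts, x ∈ C₁.srcs → x = u) ∧
    (∀ x ∈ P.verts, x ∈ C₂.srcs → x = w) ∧
    ∀ e ∈ P.edges, e ∉ C₁.edges ∧ e ∉ C₂.edges

/-- The canonical closed walks traversing a circuit of the signed graph:
a balanced cycle, a tight handcuff `C₁ * C₂`, or a loose handcuff
`C₁ * P * C₂ * P⁻¹` (the circuit path edges being used twice). -/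
def IsBasicCircuitWalk (Γ : SGraph V E) {v : V} (W : Γ.Walk v v) : Prop :=
  Γ.IsBalancedCycle W ∨
    (∃ C₁ C₂ : Γ.Walk v v, Γ.IsTightHandcuff C₁ C₂ ∧ W = C₁.append C₂) ∨
    ∃ (w : V) (C₁ : Γ.Walk v v) (P : Γ.Walk v w) (C₂ : Γ.Walk w w) (Q : Γ.Walk w v),
      Γ.IsLooseHandcuff C₁ P C₂ ∧ Q.IsReverseOf P ∧
        W = C₁.append (P.append (C₂.append Q))

/-- A circuit walk: a rotation of a basic circuit walk. -/
def IsCircuitWalk (Γ : SGraph V E) {v : V} (W : Γ.Walk v v) : Prop :=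
  ∃ (u : V) (A : Γ.Walk u v) (B : Γ.Walk v u),
    W = B.append A ∧ Γ.IsBasicCircuitWalk (A.append B)

/-- `e` is a circuit path edge: it lies on the connecting path of an unbalanced
loose handcuff. -/
def IsCircuitPathEdge (Γ : SGraph V E) (e : E) : Prop :=
  ∃ (u w : V) (C₁ : Γ.Walk u u) (P : Γ.Walk u w) (C₂ : Γ.Walk w w),
    Γ.IsLooseHandcuff C₁ P C₂ ∧ e ∈ P.edges

/-- Adjacency via an edge. -/
def Adj (Γ : SGraph V E) (a b : V) : Prop := ∃ e, Γ.ends e = (a, b) ∨ Γ.ends e = (b, a)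

/-- The set of connected components. -/
def Components (Γ : SGraph V E) : Type _ := Quot Γ.Adj

/-- The connected component of a vertex. -/
def comp (Γ : SGraph V E) (v : V) : Γ.Components := Quot.mk _ v

/-- The number `k(Γ)` of connected components. -/
def kAll (Γ : SGraph V E) : ℕ := Nat.card Γ.Components

/-- A connected component is balanced if every cycle it contains is balanced. -/
def IsBalancedComponent (Γ : SGraph V E) (c : Γ.Components) : Prop :=
  ∀ v : V, Γ.comp v = c → ∀ W : Γ.Walk v v, Γ.IsCycle W → W.sgn = 1

/-- The number `k_b(Σ)` of balanced connected components. -/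
def kb (Γ : SGraph V E) : ℕ := Nat.card {c : Γ.Components // Γ.IsBalancedComponent c}

/-- The number `k_u(Σ)` of unbalanced connected components. -/
def ku (Γ : SGraph V E) : ℕ := Nat.card {c : Γ.Components // ¬ Γ.IsBalancedComponent c}

/-- A signed graph is balanced if all its cycles are balanced. -/
def Balanced (Γ : SGraph V E) : Prop :=
  ∀ (v : V) (W : Γ.Walk v v), Γ.IsCycle W → W.sgn = 1

/-- A signed graph is connected if it has exactly one connected component. -/
def Connected (Γ : SGraph V E) : Prop := Γ.kAll = 1

/-- The spanning subgraph `Σ \ Aᶜ` with edge set `A`. -/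
def restrict (Γ : SGraph V E) (A : Set E) : SGraph V A :=
  { ends := fun e => Γ.ends e, sign := fun e => Γ.sign e }

/-- The signed Tutte polynomial (as a function of `x`, `y`, `z`):
`T_Σ(X,Y,Z) = Σ_{A⊆E} (X−1)^{k(Σ\Aᶜ)−k(Σ)} (Y−1)^{|A|−|V|+k_b(Σ\Aᶜ)} (Z−1)^{k_u(Σ\Aᶜ)}`. -/
def signedTutte {K : Type*} [CommRing K] (Γ : SGraph V E) (x y z : K) : K :=
  ∑ᶠ A : Finset E,
    (x - 1) ^ ((Γ.restrict (A : Set E)).kAll - Γ.kAll) *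
      (y - 1) ^ ((A.card + (Γ.restrict (A : Set E)).kb) - Nat.card V) *
        (z - 1) ^ (Γ.restrict (A : Set E)).ku

/-- Deletion of an edge. -/
def deleteEdge (Γ : SGraph V E) (e : E) : SGraph V {e' : E // e' ≠ e} :=
  { ends := fun e' => Γ.ends e'.1, sign := fun e' => Γ.sign e'.1 }

/-- The relation identifying the two endpoints of `e`. -/
def contractRel (Γ : SGraph V E) (e : E) (a b : V) : Prop := (a, b) = Γ.ends e

/-- Contraction of an edge: the two endpoints are identified and the edge is
deleted.  (For a loop this is just deletion, as the identification is trivial.) -/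
def contract (Γ : SGraph V E) (e : E) : SGraph (Quot (Γ.contractRel e)) {e' : E // e' ≠ e} :=
  { ends := fun e' => (Quot.mk _ (Γ.ends e'.1).1, Quot.mk _ (Γ.ends e'.1).2),
    sign := fun e' => Γ.sign e'.1 }

/-- `e` is a bridge: its deletion increases the number of connected components. -/
def IsBridge (Γ : SGraph V E) (e : E) : Prop := Γ.kAll < (Γ.deleteEdge e).kAll

/-- An orientation of the half-edges, compatible with the signature. -/
def IsCompatible (Γ : SGraph V E) (ω : E → Bool → ℤˣ) : Prop :=
  ∀ e, Γ.sign e = -(ω e true * ω e false)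

/-- A `G`-flow: Kirchhoff's law holds at every vertex. -/
def IsFlow (Γ : SGraph V E) (ω : E → Bool → ℤˣ) {G : Type*} [AddCommGroup G]
    (f : E → G) : Prop :=
  ∀ v : V,
    (∑ᶠ e : E, ((if Γ.endpt e true = v then (ω e true : ℤ) • f e else 0) +
      (if Γ.endpt e false = v then (ω e false : ℤ) • f e else 0))) = 0

/-- A `G`-tension: the alternating sum along every circuit walk vanishes. -/
def IsTension (Γ : SGraph V E) (ω : E → Bool → ℤˣ) {G : Type*} [AddCommGroup G]
    (f : E → G) : Prop :=
  ∀ (v : V) (W : Γ.Walk v v), Γ.IsCircuitWalk W → W.tensionSum ω f = 0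

end SGraph

/-- The doubling homomorphism `x ↦ x + x = 2x` of an abelian group. -/
def doubleHom (G : Type*) [AddCommGroup G] : G →+ G :=
  AddMonoidHom.mk' (fun x => x + x) (fun a b => add_add_add_comm a b a b)

/-- The subgroup `2G = {2x : x ∈ G}`. -/
def twoG (G : Type*) [AddCommGroup G] : AddSubgroup G := (doubleHom G).range

/-- The `2`-torsion subgroup `G₂ = {x ∈ G : 2x = 0}`. -/
def torsion2 (G : Type*) [AddCommGroup G] : AddSubgroup G := (doubleHom G).ker

namespace SGraph

variable {V E : Type*}

/-- A `G`-potential difference: a `G`-tension whose sum around every unbalanced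
cycle lies in `2G`. -/
def IsPotentialDifference (Γ : SGraph V E) (ω : E → Bool → ℤˣ) {G : Type*} [AddCommGroup G]
    (f : E → G) : Prop :=
  Γ.IsTension ω f ∧
    ∀ (v : V) (W : Γ.Walk v v), Γ.IsUnbalancedCycle W → W.edgeSum f ∈ twoG G

end SGraph

namespace SGraph

variable {V E : Type*}

/-- Proper coloring by elements of a set `X` with involution `ι`: adjacent
endpoints of a positive edge get different colors, and for a negative edge the
`ι`-image of one endpoint's color differs from the other endpoint's color. -/
def IsProperInvColoring (Γ : SGraph V E) {X : Type*} (ι : X → X) (f : V → X) : Prop :=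
  ∀ e : E, (Γ.sign e = 1 → f ((Γ.ends e).1) ≠ f ((Γ.ends e).2)) ∧
    (Γ.sign e = -1 → ι (f ((Γ.ends e).1)) ≠ f ((Γ.ends e).2))

/-- A proper `G`-coloring: for every edge `e = uv`, `f(u) ≠ f(v)` if `e` is
positive and `-f(u) ≠ f(v)` if `e` is negative, i.e. `σ(e)•f(u) ≠ f(v)`. -/
def IsProperColoring (Γ : SGraph V E) {G : Type*} [AddCommGroup G] (f : V → G) : Prop :=
  ∀ e : E, ((Γ.sign e : ℤ) • f ((Γ.ends e).1)) ≠ f ((Γ.ends e).2)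

/-- Zaslavsky's proper `n`-coloring: colors in `{0, ±1, …, ±n}` with
`f(u) ≠ σ(e)·f(v)` for every edge `e = uv`. -/
def IsProperNColoring (Γ : SGraph V E) (n : ℕ) (f : V → ℤ) : Prop :=
  (∀ v, |f v| ≤ (n : ℤ)) ∧
    ∀ e : E, f ((Γ.ends e).1) ≠ (Γ.sign e : ℤ) * f ((Γ.ends e).2)

/-- `T ⊆ E` is a spanning tree: the spanning subgraph `(V,T)` is connected and
contains no cycle. -/
def IsSpanningTree (Γ : SGraph V E) (T : Set E) : Prop :=
  (Γ.restrict T).Connected ∧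
    ∀ (v : V) (W : (Γ.restrict T).Walk v v), ¬ (Γ.restrict T).IsCycle W

/-- A connected basis of a connected signed graph: a spanning tree if `Σ` is
balanced; otherwise a spanning tree plus one extra edge closing an unbalanced
cycle. -/
def IsConnectedBasis (Γ : SGraph V E) (B : Set E) : Prop :=
  (Γ.Balanced ∧ Γ.IsSpanningTree B) ∨
    (¬ Γ.Balanced ∧ ∃ (T : Set E) (e : E), Γ.IsSpanningTree T ∧ e ∉ T ∧ B = insert e T ∧
      ∀ (v : V) (W : (Γ.restrict B).Walk v v), (Γ.restrict B).IsCycle W → W.sgn = -1)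

/-- Switching at a vertex `v`: the sign of every non-loop edge incident with `v`
is negated; loops keep their sign. -/
def switchAt (Γ : SGraph V E) (v : V) : SGraph V E :=
  { ends := Γ.ends,
    sign := fun e => if ((Γ.ends e).1 = v ↔ (Γ.ends e).2 = v) then Γ.sign e else -Γ.sign e }

/-- Switching at a set `S` of vertices (the composite of the switchings at the
vertices of `S`): the sign of an edge is negated iff exactly one of its
endpoints lies in `S`. -/
def switchSet (Γ : SGraph V E) (S : Set V) : SGraph V E :=
  { ends := Γ.ends,
    sign := fun e => if ((Γ.ends e).1 ∈ S ↔ (Γ.ends e).2 ∈ S) then Γ.sign e else -Γ.sign e }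

/-- Isomorphism of signed graphs (as undirected signed multigraphs). -/
def Iso {V₁ E₁ V₂ E₂ : Type*} (Γ₁ : SGraph V₁ E₁) (Γ₂ : SGraph V₂ E₂) : Prop :=
  ∃ (φ : V₁ ≃ V₂) (ψ : E₁ ≃ E₂), ∀ e : E₁,
    (Γ₂.ends (ψ e) = (φ (Γ₁.ends e).1, φ (Γ₁.ends e).2) ∨
      Γ₂.ends (ψ e) = (φ (Γ₁.ends e).2, φ (Γ₁.ends e).1)) ∧
    Γ₂.sign (ψ e) = Γ₁.sign e

/-- Switching equivalence: isomorphism after switching at a set of vertices. -/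
def SwitchEquiv {V₁ E₁ V₂ E₂ : Type*} (Γ₁ : SGraph V₁ E₁) (Γ₂ : SGraph V₂ E₂) : Prop :=
  ∃ S : Set V₁, Iso (Γ₁.switchSet S) Γ₂

/-- Disjoint union of signed graphs. -/
def disjUnion {V₁ E₁ V₂ E₂ : Type*} (Γ₁ : SGraph V₁ E₁) (Γ₂ : SGraph V₂ E₂) :
    SGraph (V₁ ⊕ V₂) (E₁ ⊕ E₂) where
  ends := fun e => match e with
    | .inl e => (Sum.inl (Γ₁.ends e).1, Sum.inl (Γ₁.ends e).2)
    | .inr e => (Sum.inr (Γ₂.ends e).1, Sum.inr (Γ₂.ends e).2)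
  sign := fun e => match e with
    | .inl e => Γ₁.sign e
    | .inr e => Γ₂.sign e

/-- The difference operator `δ : G^V → G^E`,
`(δg)(e) = ω(v,e)·g(v) + ω(u,e)·g(u)` for `e = uv`. -/
def deltaHom (Γ : SGraph V E) (ω : E → Bool → ℤˣ) (G : Type*) [AddCommGroup G] :
    (V → G) →+ (E → G) :=
  AddMonoidHom.mk'
    (fun g e => (ω e true : ℤ) • g ((Γ.ends e).1) + (ω e false : ℤ) • g ((Γ.ends e).2))
    (by
      intro a b
      funext e
      simp only [Pi.add_apply, smul_add]
      abel)

end SGraph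

end SignedGraphs

/-!
Inclusion–exclusion over the set of edges violating properness gives
`P = ∑_A (-1)^|A| N(A)`, where `N(A)` counts the colorings `f` with `f(v) = ι^[σ(e) = -1] (f(u))`
on every edge `e = uv` of `A`. Along a walk such a coloring is transformed by the sign of the
walk, so it is determined by one value per component of `(V, A)`: an arbitrary color on a
balanced component, and an `ι`-fixed color on an unbalanced one, which carries a closed walk
of sign `-1`. Hence `N(A) = |X|^{k_b(A)} t^{k_u(A)}`, and `(-1)^|A| N(A)` is the summand of `A` in
`(-1)^{|V|-k} |X|^k T(1-|X|, 0, 1-t/|X|)`. That the exponents there are honest natural numbers needs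
`|V| ≤ |A| + k_b(A)`: over `ZMod 3` with `ι = -·`, the colorings counted by `N(A)` form the kernel
of a linear map `(ZMod 3)^V → (ZMod 3)^A`, so `3^{k_b(A)} ≥ 3^{|V| - |A|}`.
-/

theorem List.exists_eq_append_cons_append_cons_of_not_nodup_map {α β : Type*} {f : α → β} :
    ∀ {l : List α}, ¬ (l.map f).Nodup →
      ∃ a b l₁ l₂ l₃, l = l₁ ++ a :: (l₂ ++ b :: l₃) ∧ f a = f b
  | [], h => absurd List.nodup_nil h
  | x :: t, h => by
    by_cases hx : f x ∈ t.map f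
    · obtain ⟨b, hb, hfb⟩ := List.mem_map.1 hx
      obtain ⟨l₂, l₃, rfl⟩ := List.append_of_mem hb
      exact ⟨x, b, [], l₂, l₃, rfl, hfb.symm⟩
    · have ht : ¬ (t.map f).Nodup := fun hn => h (List.nodup_cons.2 ⟨hx, hn⟩)
      obtain ⟨a, b, l₁, l₂, l₃, rfl, hab⟩ := exists_eq_append_cons_append_cons_of_not_nodup_map ht
      exact ⟨a, b, x :: l₁, l₂, l₃, rfl, hab⟩

theorem card_fun_forall_not_imp {C X : Type*} [Finite C] (p : C → Prop) (q : X → Prop) :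
    Nat.card {g : C → X // ∀ c, ¬ p c → q (g c)} =
      Nat.card X ^ Nat.card {c // p c} * Nat.card {x // q x} ^ Nat.card {c // ¬ p c} := by
  have := Fintype.ofFinite C
  have hfib (c : C) : Nat.card {x // ¬ p c → q x} =
      if p c then Nat.card X else Nat.card {x // q x} := by
    by_cases hc : p c <;> simp [hc]
  rw [Nat.card_congr (Equiv.subtypePiEquivPi (p := fun c x => ¬ p c → q x)), Nat.card_pi]
  simp_rw [hfib]
  rw [Finset.prod_ite, Finset.prod_const, Finset.prod_const, ← Fintype.card_subtype,
    ← Fintype.card_subtype, ← Nat.card_eq_fintype_card, ← Nat.card_eq_fintype_card]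

theorem card_forall_not_eq_sum {α ι : Type*} [Finite α] [Fintype ι] (P : ι → α → Prop) :
    (Nat.card {a // ∀ i, ¬ P i a} : ℤ) =
      ∑ s : Finset ι, (-1) ^ s.card * (Nat.card {a // ∀ i ∈ s, P i a} : ℤ) := by
  have := Fintype.ofFinite α
  have h := Finset.inclusion_exclusion_card_inf_compl Finset.univ fun i => {a | P i a}
  rw [Finset.powerset_univ] at h
  convert h using 3 <;>
  · rw [Nat.card_eq_fintype_card, Fintype.card_subtype]
    congr 2
    ext a
    simp [Finset.mem_inf]

def signAct {X : Type*} (ι : X → X) (s : ℤˣ) (x : X) : X := if s = 1 then x else ι x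

section SignAct

variable {X : Type*} {ι : X → X}

@[simp] theorem signAct_one (x : X) : signAct ι 1 x = x := if_pos rfl

@[simp] theorem signAct_neg_one (x : X) : signAct ι (-1) x = ι x := if_neg (by decide)

theorem signAct_mul (hι : Function.Involutive ι) (s t : ℤˣ) (x : X) :
    signAct ι (s * t) x = signAct ι s (signAct ι t x) := by
  rcases Int.units_eq_one_or s with rfl | rfl <;> rcases Int.units_eq_one_or t with rfl | rfl <;>
    simp [hι x]

theorem signAct_signAct (hι : Function.Involutive ι) (s : ℤˣ) (x : X) :
    signAct ι s (signAct ι s x) = x := by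
  rw [← signAct_mul hι, Int.units_mul_self, signAct_one]

theorem signAct_of_fixed {x : X} (hx : ι x = x) (s : ℤˣ) : signAct ι s x = x := by
  rcases Int.units_eq_one_or s with rfl | rfl <;> simp [hx]

theorem apply_signAct (s : ℤˣ) (x : X) : ι (signAct ι s x) = signAct ι s (ι x) := by
  rcases Int.units_eq_one_or s with rfl | rfl <;> simp

end SignAct

/-- The hypotheses make the truncated subtractions in the exponents exact. -/
theorem tutte_summand_eval {K : Type*} [Field K] {n : K} (hn : n ≠ 0) (t : K)
    {a v k kA kb ku : ℕ} (hk : k ≤ kA) (hkv : kA ≤ v) (hv : v ≤ a + kb) (hkA : kb + ku = kA) :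
    (-1) ^ (v - k) * n ^ k *
        ((1 - n - 1) ^ (kA - k) * (0 - 1) ^ (a + kb - v) * (1 - t / n - 1) ^ ku) =
      (-1) ^ a * (n ^ kb * t ^ ku) := by
  obtain ⟨d₁, rfl⟩ := Nat.exists_eq_add_of_le hk
  obtain ⟨d₂, rfl⟩ := Nat.exists_eq_add_of_le hkv
  obtain ⟨d₃, hd₃⟩ := Nat.exists_eq_add_of_le hv
  have hparity : (-1 : K) ^ a = (-1) ^ (d₁ + d₁ + d₂ + d₃ + ku) := by
    rw [neg_one_pow_eq_pow_mod_two, neg_one_pow_eq_pow_mod_two (d₁ + d₁ + d₂ + d₃ + ku)]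
    congr 1
    omega
  have hn' : n ^ kb * n ^ ku = n ^ k * n ^ d₁ := by rw [← pow_add, ← pow_add, hkA]
  rw [show k + d₁ + d₂ - k = d₁ + d₂ by omega, show k + d₁ - k = d₁ by omega,
    show a + kb - (k + d₁ + d₂) = d₃ by omega, hparity]
  simp only [sub_sub_cancel_left, zero_sub, neg_pow n, neg_pow (t / n), div_pow, pow_add]
  field_simp
  rw [← hn']
  ring

namespace SGraph

variable {V E : Type*} {Γ : SGraph V E} {X : Type*} {ι : X → X}

namespace Walk

def copy {u v u' v' : V} (W : Γ.Walk u v) (hu : u = u') (hv : v = v') : Γ.Walk u' v' :=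
  hv ▸ hu ▸ W

@[simp] theorem steps_copy {u v u' v' : V} (W : Γ.Walk u v) (hu : u = u') (hv : v = v') :
    (W.copy hu hv).steps = W.steps := by
  subst hu hv; rfl

@[simp] theorem sgn_copy {u v u' v' : V} (W : Γ.Walk u v) (hu : u = u') (hv : v = v') :
    (W.copy hu hv).sgn = W.sgn := by
  subst hu hv; rfl

theorem edges_eq_map_steps {u v : V} (W : Γ.Walk u v) : W.edges = W.steps.map Prod.fst := by
  induction W with
  | nil => rfl
  | cons e d p ih => simp [edges, steps, ih]

theorem srcs_eq_map_steps {u v : V} (W : Γ.Walk u v) :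
    W.srcs = W.steps.map fun s => Γ.endpt s.1 s.2 := by
  suffices W.verts = (W.steps.map fun s => Γ.endpt s.1 s.2) ++ [v] by simp [srcs, this]
  induction W with
  | nil => rfl
  | cons e d p ih => simp [verts, steps, ih]

theorem sgn_eq_prod_steps {u v : V} (W : Γ.Walk u v) :
    W.sgn = (W.steps.map fun s => Γ.sign s.1).prod := by
  induction W with
  | nil => rfl
  | cons e d p ih => simp [sgn, steps, ih]

@[simp] theorem steps_append {u v w : V} (P : Γ.Walk u v) (Q : Γ.Walk v w) :
    (P.append Q).steps = P.steps ++ Q.steps := by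
  induction P with
  | nil => rfl
  | cons e d p ih => simp [append, steps, ih]

theorem sgn_append {u v w : V} (P : Γ.Walk u v) (Q : Γ.Walk v w) :
    (P.append Q).sgn = P.sgn * Q.sgn := by
  simp [sgn_eq_prod_steps]

theorem exists_tail_of_steps_eq_cons {u v : V} (W : Γ.Walk u v) {e : E} {d : Bool}
    {l : List (E × Bool)} (h : W.steps = (e, d) :: l) :
    u = Γ.endpt e d ∧ ∃ W' : Γ.Walk (Γ.endpt e (!d)) v, W'.steps = l := by
  cases W with
  | nil => simp [steps] at h
  | cons e' d' p =>
    simp only [steps, List.cons.injEq, Prod.mk.injEq] at h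
    obtain ⟨⟨rfl, rfl⟩, rfl⟩ := h
    exact ⟨rfl, p, rfl⟩

theorem exists_split_of_steps_eq_append {u v : V} (W : Γ.Walk u v)
    {l₁ l₂ : List (E × Bool)} (h : W.steps = l₁ ++ l₂) :
    ∃ (w : V) (A : Γ.Walk u w) (B : Γ.Walk w v), A.steps = l₁ ∧ B.steps = l₂ := by
  induction l₁ generalizing u W with
  | nil => exact ⟨u, .nil u, W, rfl, h⟩
  | cons s l₁ ih =>
    cases W with
    | nil => simp [steps] at h
    | cons e d p =>
      simp only [steps, List.cons_append, List.cons.injEq] at h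
      obtain ⟨w, A, B, hA, hB⟩ := ih p h.2
      exact ⟨w, .cons e d A, B, by simp [steps, hA, h.1], hB⟩

theorem exists_sgn_eq_reverse {u v : V} (W : Γ.Walk u v) : ∃ W' : Γ.Walk v u, W'.sgn = W.sgn := by
  induction W with
  | nil v => exact ⟨.nil v, rfl⟩
  | cons e d p ih =>
    obtain ⟨q, hq⟩ := ih
    refine ⟨q.append ((Walk.cons e (!d) (.nil _)).copy rfl (by rw [Bool.not_not])), ?_⟩
    simp [sgn_append, sgn, hq, mul_comm]

end Walk

theorem comp_eq_of_walk {u v : V} (W : Γ.Walk u v) : Γ.comp u = Γ.comp v := by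
  induction W with
  | nil => rfl
  | cons e d p ih =>
    refine Eq.trans (Quot.sound ⟨e, ?_⟩) ih
    cases d
    · exact Or.inr rfl
    · exact Or.inl rfl

theorem nonempty_walk_of_comp_eq {u v : V} (h : Γ.comp u = Γ.comp v) :
    Nonempty (Γ.Walk u v) := by
  replace h : Relation.EqvGen Γ.Adj u v := Quot.eq.1 h
  induction h with
  | rel a b hab =>
    obtain ⟨e, he | he⟩ := hab
    · exact ⟨(Walk.cons e true (.nil _)).copy (by simp [endpt, he]) (by simp [endpt, he])⟩
    · exact ⟨(Walk.cons e false (.nil _)).copy (by simp [endpt, he]) (by simp [endpt, he])⟩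
  | refl a => exact ⟨.nil a⟩
  | symm a b _ ih => exact ⟨(Walk.exists_sgn_eq_reverse ih.some).choose⟩
  | trans a b c _ _ ih₁ ih₂ => exact ⟨ih₁.some.append ih₂.some⟩

namespace Walk

def SplitsIntoShorter {v : V} (W : Γ.Walk v v) : Prop :=
  ∃ (x : V) (B : Γ.Walk x x) (D : Γ.Walk v v), B.steps.length < W.steps.length ∧
    D.steps.length < W.steps.length ∧ W.sgn = B.sgn * D.sgn ∧ Γ.comp v = Γ.comp x

theorem splitsIntoShorter_of_not_nodup_srcs {v : V} (W : Γ.Walk v v) (h : ¬ W.srcs.Nodup) :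
    W.SplitsIntoShorter := by
  rw [srcs_eq_map_steps] at h
  obtain ⟨a, b, s₁, s₂, s₃, hW, hab⟩ := List.exists_eq_append_cons_append_cons_of_not_nodup_map h
  obtain ⟨x, A, M, hA, hM⟩ := W.exists_split_of_steps_eq_append hW
  obtain ⟨y, B, C, hB, hC⟩ :=
    M.exists_split_of_steps_eq_append (l₁ := a :: s₂) (l₂ := b :: s₃) (by simp [hM])
  have hyx : y = x := by
    rw [(B.exists_tail_of_steps_eq_cons hB).1, (C.exists_tail_of_steps_eq_cons hC).1, hab]
  refine ⟨x, B.copy rfl hyx, A.append (C.copy hyx rfl), ?_, ?_, ?_, comp_eq_of_walk A⟩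
  · simp [hW, hB]; omega
  · simp [hW, hA, hC]
  · simp only [sgn_eq_prod_steps, steps_copy, steps_append, hW, hA, hB, hC, List.map_append,
      List.map_cons, List.prod_append, List.prod_cons]
    ac_rfl

/-- With distinct sources, a repeated edge is traversed back and forth, `W = A · e · B · e⁻¹ · C`,
and the two traversals of `e` cancel in the sign. -/
theorem splitsIntoShorter_of_not_nodup_edges {v : V} (W : Γ.Walk v v) (hs : W.srcs.Nodup)
    (h : ¬ W.edges.Nodup) : W.SplitsIntoShorter := by
  rw [edges_eq_map_steps] at h
  obtain ⟨⟨e, d⟩, ⟨e', d'⟩, s₁, s₂, s₃, hW, rfl : e = e'⟩ :=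
    List.exists_eq_append_cons_append_cons_of_not_nodup_map h
  obtain rfl : d' = !d := by
    rw [srcs_eq_map_steps, hW, List.map_append, List.map_cons] at hs
    have hne : Γ.endpt e d ≠ Γ.endpt e d' := fun heq =>
      (List.nodup_cons.1 hs.of_append_right).1 (by simp [heq])
    cases d <;> cases d' <;> simp_all
  obtain ⟨x, A, M, hA, hM⟩ := W.exists_split_of_steps_eq_append hW
  obtain ⟨hx, M', hM'⟩ := M.exists_tail_of_steps_eq_cons hM
  obtain ⟨y, B, C, hB, hC⟩ := M'.exists_split_of_steps_eq_append hM'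
  obtain ⟨hy, C', hC'⟩ := C.exists_tail_of_steps_eq_cons hC
  refine ⟨_, B.copy rfl hy, A.append (C'.copy (by rw [Bool.not_not, hx]) rfl), ?_, ?_, ?_,
    (comp_eq_of_walk (B.append C)).symm⟩
  · simp [hW, hB]; omega
  · simp [hW, hA, hC']; omega
  · simp only [sgn_eq_prod_steps, steps_copy, steps_append, hW, hA, hB, hC', List.map_append,
      List.map_cons, List.prod_append, List.prod_cons]
    rcases Int.units_eq_one_or (Γ.sign e) with hσ | hσ <;> simp [hσ, mul_left_comm]

theorem splitsIntoShorter_of_not_isCycle {v : V} (W : Γ.Walk v v) (hne : W.steps ≠ [])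
    (h : ¬ Γ.IsCycle W) : W.SplitsIntoShorter := by
  by_cases hs : W.srcs.Nodup
  · refine W.splitsIntoShorter_of_not_nodup_edges hs fun he => h ⟨?_, hs, he⟩
    simpa [edges_eq_map_steps] using hne
  · exact W.splitsIntoShorter_of_not_nodup_srcs hs

end Walk

theorem exists_isCycle_sgn_ne_one {v : V} (W : Γ.Walk v v) (h : W.sgn ≠ 1) :
    ∃ (w : V) (C : Γ.Walk w w), Γ.IsCycle C ∧ C.sgn ≠ 1 ∧ Γ.comp v = Γ.comp w := by
  obtain ⟨n, hn⟩ : ∃ n, W.steps.length = n := ⟨_, rfl⟩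
  induction n using Nat.strong_induction_on generalizing v with
  | _ n ih =>
    by_cases hC : Γ.IsCycle W
    · exact ⟨v, W, hC, h, rfl⟩
    have hne : W.steps ≠ [] := fun h0 => h (by rw [W.sgn_eq_prod_steps, h0]; rfl)
    obtain ⟨x, B, D, hB, hD, hsgn, hcomp⟩ := W.splitsIntoShorter_of_not_isCycle hne hC
    by_cases hB1 : B.sgn = 1
    · exact ih _ (hn ▸ hD) D (by rwa [hsgn, hB1, one_mul] at h) rfl
    · obtain ⟨w, C, hC, hCs, hxw⟩ := ih _ (hn ▸ hB) B hB1 rfl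
      exact ⟨w, C, hC, hCs, hcomp.trans hxw⟩

theorem Walk.sgn_eq_one_of_isBalancedComponent {v : V}
    (hb : Γ.IsBalancedComponent (Γ.comp v)) (W : Γ.Walk v v) : W.sgn = 1 := by
  by_contra h
  obtain ⟨w, C, hC, hCs, hvw⟩ := exists_isCycle_sgn_ne_one W h
  exact hCs (hb w hvw.symm C hC)

def IsMonoEdge (Γ : SGraph V E) (ι : X → X) (e : E) (f : V → X) : Prop :=
  f (Γ.ends e).2 = signAct ι (Γ.sign e) (f (Γ.ends e).1)

theorem isProperInvColoring_iff (f : V → X) :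
    Γ.IsProperInvColoring ι f ↔ ∀ e, ¬ Γ.IsMonoEdge ι e f := by
  refine forall_congr' fun e => ?_
  rcases Int.units_eq_one_or (Γ.sign e) with hσ | hσ <;>
    simp [IsMonoEdge, hσ, eq_comm]

theorem IsMonoEdge.apply_endpt_not {f : V → X} {e : E} (hι : Function.Involutive ι)
    (hf : Γ.IsMonoEdge ι e f) (d : Bool) :
    f (Γ.endpt e (!d)) = signAct ι (Γ.sign e) (f (Γ.endpt e d)) := by
  cases d
  · exact (signAct_signAct hι _ _).symm.trans (congrArg _ hf.symm)
  · exact hf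

theorem Walk.apply_eq_signAct_sgn {f : V → X} (hι : Function.Involutive ι)
    (hf : ∀ e, Γ.IsMonoEdge ι e f) {u v : V} (W : Γ.Walk u v) :
    f v = signAct ι W.sgn (f u) := by
  induction W with
  | nil => simp [sgn]
  | cons e d p ih =>
    rw [ih, (hf e).apply_endpt_not hι, sgn, mul_comm, signAct_mul hι]

theorem Walk.sgn_eq_of_isBalancedComponent {u v : V} (hb : Γ.IsBalancedComponent (Γ.comp u))
    (P Q : Γ.Walk u v) : P.sgn = Q.sgn := by
  obtain ⟨Q', hQ'⟩ := Q.exists_sgn_eq_reverse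
  have h := (P.append Q').sgn_eq_one_of_isBalancedComponent hb
  rw [sgn_append, hQ'] at h
  exact (eq_inv_of_mul_eq_one_left h).trans (Int.units_inv_eq_self _)

noncomputable def rootWalk (Γ : SGraph V E) (v : V) : Γ.Walk (Γ.comp v).out v :=
  (nonempty_walk_of_comp_eq (Quot.out_eq (Γ.comp v))).some

theorem apply_out_fixed_of_not_isBalancedComponent (hι : Function.Involutive ι) {f : V → X}
    (hf : ∀ e, Γ.IsMonoEdge ι e f) {c : Γ.Components} (hc : ¬ Γ.IsBalancedComponent c) :
    ι (f c.out) = f c.out := by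
  simp only [IsBalancedComponent, not_forall] at hc
  obtain ⟨v, rfl, W, -, hW⟩ := hc
  have hv : ι (f v) = f v := by
    have h := W.apply_eq_signAct_sgn hι hf
    rw [(Int.units_eq_one_or _).resolve_left hW, signAct_neg_one] at h
    exact h.symm
  rw [(Γ.rootWalk v).apply_eq_signAct_sgn hι hf, apply_signAct (ι := ι)] at hv
  exact (signAct_signAct hι _ _).symm.trans ((congrArg _ hv).trans (signAct_signAct hι _ _))

instance [Finite V] (Γ : SGraph V E) : Finite Γ.Components :=
  Finite.of_surjective Γ.comp Quot.exists_rep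

noncomputable def extendColoring (Γ : SGraph V E) (ι : X → X) (g : Γ.Components → X) : V → X :=
  fun v => signAct ι (Γ.rootWalk v).sgn (g (Γ.comp v))

theorem isMonoEdge_extendColoring (hι : Function.Involutive ι) {g : Γ.Components → X}
    (hg : ∀ c, ¬ Γ.IsBalancedComponent c → ι (g c) = g c) (e : E) :
    Γ.IsMonoEdge ι e (Γ.extendColoring ι g) := by
  have hab : Γ.comp (Γ.ends e).1 = Γ.comp (Γ.ends e).2 := Quot.sound ⟨e, Or.inl rfl⟩
  simp only [IsMonoEdge, extendColoring]
  rw [← congrArg g hab, ← signAct_mul hι]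
  by_cases hb : Γ.IsBalancedComponent (Γ.comp (Γ.ends e).1)
  · have hb' : Γ.IsBalancedComponent (Γ.comp (Γ.comp (Γ.ends e).2).out) := by
      rwa [show ∀ v, Γ.comp (Γ.comp v).out = Γ.comp v from fun v => Quot.out_eq _, ← hab]
    let step : Γ.Walk (Γ.ends e).1 (Γ.ends e).2 := .cons e true (.nil _)
    have h := Walk.sgn_eq_of_isBalancedComponent hb' (Γ.rootWalk (Γ.ends e).2)
      (((Γ.rootWalk (Γ.ends e).1).append step).copy (congrArg Quot.out hab) rfl)
    rw [Walk.sgn_copy, Walk.sgn_append, show step.sgn = Γ.sign e from mul_one _] at h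
    rw [h, mul_comm]
  · rw [signAct_of_fixed (hg _ hb), signAct_of_fixed (hg _ hb)]

theorem extendColoring_out {g : Γ.Components → X}
    (hg : ∀ c, ¬ Γ.IsBalancedComponent c → ι (g c) = g c) (c : Γ.Components) :
    Γ.extendColoring ι g c.out = g c := by
  have hc : Γ.comp c.out = c := Quot.out_eq c
  simp only [extendColoring, congrArg g hc]
  by_cases hb : Γ.IsBalancedComponent c
  · have h := Walk.sgn_eq_one_of_isBalancedComponent (by rwa [hc])
      ((Γ.rootWalk c.out).copy (congrArg Quot.out hc) rfl)
    rw [Walk.sgn_copy] at h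
    rw [h, signAct_one]
  · exact signAct_of_fixed (hg c hb) _

noncomputable def monoColoringEquiv (hι : Function.Involutive ι) :
    {f : V → X // ∀ e, Γ.IsMonoEdge ι e f} ≃
      {g : Γ.Components → X // ∀ c, ¬ Γ.IsBalancedComponent c → ι (g c) = g c} where
  toFun f := ⟨fun c => f.1 c.out, fun _ => apply_out_fixed_of_not_isBalancedComponent hι f.2⟩
  invFun g := ⟨Γ.extendColoring ι g.1, isMonoEdge_extendColoring hι g.2⟩
  left_inv f := Subtype.ext <| funext fun v => ((Γ.rootWalk v).apply_eq_signAct_sgn hι f.2).symm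
  right_inv g := Subtype.ext <| funext <| extendColoring_out g.2

theorem card_monoColorings [Finite V] (hι : Function.Involutive ι) :
    Nat.card {f : V → X // ∀ e, Γ.IsMonoEdge ι e f} =
      Nat.card X ^ Γ.kb * Nat.card {x // ι x = x} ^ Γ.ku :=
  (Nat.card_congr (monoColoringEquiv hι)).trans
    (card_fun_forall_not_imp _ fun x => ι x = x)

theorem kAll_le_card [Finite V] (Γ : SGraph V E) : Γ.kAll ≤ Nat.card V :=
  Nat.card_le_card_of_surjective Γ.comp Quot.exists_rep

theorem kAll_le_kAll_restrict [Finite V] (Γ : SGraph V E) (A : Set E) :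
    Γ.kAll ≤ (Γ.restrict A).kAll :=
  Nat.card_le_card_of_surjective (Quot.lift Γ.comp fun _ _ ⟨e, he⟩ => Quot.sound ⟨e.1, he⟩)
    (Quot.ind fun v => ⟨Quot.mk _ v, rfl⟩)

theorem kb_add_ku [Finite V] (Γ : SGraph V E) : Γ.kb + Γ.ku = Γ.kAll := by
  have := Fintype.ofFinite Γ.Components
  simp only [kb, ku, kAll, Nat.card_eq_fintype_card, Fintype.card_subtype]
  exact Finset.card_filter_add_card_filter_not _

def monoDefect (Γ : SGraph V E) : (V → ZMod 3) →ₗ[ZMod 3] (E → ZMod 3) where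
  toFun f e := f (Γ.ends e).2 - ((Γ.sign e : ℤ) : ZMod 3) * f (Γ.ends e).1
  map_add' f g := by ext e; simp only [Pi.add_apply]; ring
  map_smul' c f := by ext e; simp only [Pi.smul_apply, smul_eq_mul, RingHom.id_apply]; ring

theorem mem_ker_monoDefect (Γ : SGraph V E) (f : V → ZMod 3) :
    f ∈ LinearMap.ker Γ.monoDefect ↔ ∀ e, Γ.IsMonoEdge Neg.neg e f := by
  simp only [LinearMap.mem_ker, funext_iff, Pi.zero_apply]
  refine forall_congr' fun e => ?_
  rcases Int.units_eq_one_or (Γ.sign e) with hσ | hσ <;>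
    simp [monoDefect, IsMonoEdge, hσ, sub_eq_zero, add_eq_zero_iff_eq_neg]

theorem card_le_card_add_kb [Finite V] [Finite E] (Γ : SGraph V E) :
    Nat.card V ≤ Nat.card E + Γ.kb := by
  have := Fintype.ofFinite V
  have := Fintype.ofFinite E
  have hker : Nat.card (LinearMap.ker Γ.monoDefect) = 3 ^ Γ.kb := by
    have hfix : Nat.card {x : ZMod 3 // -x = x} = 1 := by
      rw [Nat.card_eq_fintype_card]; decide
    rw [Nat.card_congr (Equiv.subtypeEquivRight (Γ.mem_ker_monoDefect)),
      card_monoColorings neg_involutive, hfix, one_pow, mul_one, Nat.card_zmod]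
  have hdim : Module.finrank (ZMod 3) (LinearMap.ker Γ.monoDefect) = Γ.kb := by
    rw [Module.natCard_eq_pow_finrank (K := ZMod 3), Nat.card_zmod] at hker
    exact Nat.pow_right_injective (by norm_num) hker
  have hrange := Submodule.finrank_le (LinearMap.range Γ.monoDefect)
  have hsum := LinearMap.finrank_range_add_finrank_ker Γ.monoDefect
  simp only [Module.finrank_fintype_fun_eq_card] at hrange hsum
  rw [Nat.card_eq_fintype_card, Nat.card_eq_fintype_card]
  omega

theorem card_monoColorings_restrict [Finite V] (Γ : SGraph V E) (hι : Function.Involutive ι)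
    (A : Finset E) :
    Nat.card {f : V → X // ∀ e ∈ A, Γ.IsMonoEdge ι e f} =
      Nat.card X ^ (Γ.restrict A).kb * Nat.card {x // ι x = x} ^ (Γ.restrict A).ku :=
  (Nat.card_congr (Equiv.subtypeEquivRight fun _ =>
    ⟨fun h (e : (A : Set E)) => h e.1 e.2, fun h e he => h ⟨e, he⟩⟩)).trans
    (card_monoColorings (Γ := Γ.restrict A) hι)

theorem card_le_card_add_kb_restrict [Finite V] (Γ : SGraph V E) (A : Finset E) :
    Nat.card V ≤ A.card + (Γ.restrict (A : Set E)).kb := by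
  simpa [Nat.card_coe_set_eq, Set.ncard_coe_finset] using
    (Γ.restrict (A : Set E)).card_le_card_add_kb

end SGraph

section Statement

open SGraph

/-- Theorem 6.5: the number of proper `(X,ι)`-colorings of a signed graph. -/
theorem card_proper_inv_colorings (V E : Type) [Finite V] [Finite E]
    (Γ : SGraph V E) (X : Type) [Finite X] [Nonempty X]
    (ι : X → X) (hι : ∀ x, ι (ι x) = x) :
    (Nat.card {f : V → X // Γ.IsProperInvColoring ι f} : ℚ) =
      (-1 : ℚ) ^ (Nat.card V - Γ.kAll) * (Nat.card X : ℚ) ^ Γ.kAll *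
        Γ.signedTutte (1 - (Nat.card X : ℚ)) 0
          (1 - (Nat.card {x : X // ι x = x} : ℚ) / (Nat.card X : ℚ)) := by
  have := Fintype.ofFinite E
  have hX : (Nat.card X : ℚ) ≠ 0 := Nat.cast_ne_zero.2 Nat.card_pos.ne'
  have hproper : (Nat.card {f : V → X // Γ.IsProperInvColoring ι f} : ℚ) =
      ∑ A : Finset E,
        (-1) ^ A.card * (Nat.card {f : V → X // ∀ e ∈ A, Γ.IsMonoEdge ι e f} : ℚ) := by
    simp_rw [isProperInvColoring_iff]
    exact_mod_cast card_forall_not_eq_sum fun e f => Γ.IsMonoEdge ι e f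
  rw [hproper, signedTutte, finsum_eq_sum_of_fintype, Finset.mul_sum]
  refine Finset.sum_congr rfl fun A _ => ?_
  rw [card_monoColorings_restrict Γ hι, Nat.cast_mul, Nat.cast_pow, Nat.cast_pow]
  exact (tutte_summand_eval hX _ (Γ.kAll_le_kAll_restrict A) (kAll_le_card _)
    (Γ.card_le_card_add_kb_restrict A) (kb_add_ku _)).symm

end Statement
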